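/- arXiv:2409.12579 — 4 statements merged into one kernel-verified Lean document; each statement's English description precedes it below -/
import Mathlib

section
/- Let d ≥ 0 and k ≥ 2 be integers. For every function f : ℤ^d → ℂ supported in the binary cube {0,1}^d and every real exponent p with 0 < p ≤ 2^k / log₂(2k+2), one has ‖f‖_{U^k} ≤ ‖f‖_{ℓ^p}. -/
open scoped BigOperators

/-- The `2^k`-th power of the Gowers uniformity norm (the Gowers box form):
`‖f‖_{U^k}^{2^k} = Σ_{a,h₁,…,h_k} Π_{ε∈{0,1}^k} C^{ε₁+⋯+ε_k} f(a+ε₁h₁+⋯+ε_kh_k)`. -/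
noncomputable def gbox (k : ℕ) {G : Type*} [AddCommGroup G] (f : G → ℂ) : ℂ :=
  ∑' a : G, ∑' h : Fin k → G,
    ∏ ε : Fin k → Bool,
      (fun z : ℂ => (starRingEnd ℂ) z)^[(Finset.univ.filter fun i => ε i = true).card]
        (f (a + ∑ i ∈ Finset.univ.filter (fun i => ε i = true), h i))

/-- The Gowers uniformity norm `‖f‖_{U^k}`. -/
noncomputable def gnorm (k : ℕ) {G : Type*} [AddCommGroup G] (f : G → ℂ) : ℝ :=
  ‖gbox k f‖ ^ ((1 : ℝ) / 2 ^ k)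

/-- The `ℓ^p` norm of `f`. -/
noncomputable def lpnorm (p : ℝ) {G : Type*} (f : G → ℂ) : ℝ :=
  (∑' x : G, ‖f x‖ ^ p) ^ (1 / p)

/-- The discrete cube `{0,1,…,n-1}^d` inside `ℤ^d`. -/
def cube (n d : ℕ) : Set (Fin d → ℤ) := {x | ∀ i, 0 ≤ x i ∧ x i < n}

/-!
Let `u = |f|`, supported in `{0,1}^d`, and let `B(u)` be the box sum of `u` (the `2^k`-th power of
its Gowers norm). Split `ℤ^{d+1} = ℤ × ℤ^d`. A cube `a + ε·h` all of whose vertices lie in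
`{0,1}^{d+1}` either has constant first coordinate, or its first coordinate moves along exactly
one direction `i` (that of `h_i`). The former contribute the box sums `B₀`, `B₁` of the two slices
of `u`; each of the `2k` latter families is at most `√(B₀ B₁)` by Cauchy–Schwarz in direction `i`.
Hence `B(u) ≤ B₀ + B₁ + 2k √(B₀ B₁)`. If `2^t = 2k + 2`, the elementary inequality
`a^t + b^t + (2^t - 2)(ab)^{t/2} ≤ (a + b)^t` lets induction on `d` give
`B(u) ≤ (∑ u^p)^t` for `p t = 2^k`, i.e. `‖f‖_{U^k} ≤ ‖f‖_{ℓ^p}` at `p = 2^k / t`; smaller `p`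
follow since `ℓ^p` norms decrease in `p`.
-/

lemma Finset.sum_piFinset_const_insertNth {α M : Type*} [AddCommMonoid M] {m : ℕ}
    (i : Fin (m + 1)) (s : Finset α) (f : (Fin (m + 1) → α) → M) :
    ∑ x ∈ Fintype.piFinset (fun _ => s), f x
      = ∑ c ∈ s, ∑ x ∈ Fintype.piFinset (fun _ => s), f (i.insertNth c x) := by
  have := Finset.filter_piFinset_eq_map_insertNthEquiv (p := i) (fun _ => s) (fun _ => True)
  simp only [Finset.filter_true] at this
  rw [this, Finset.sum_map, Finset.sum_product]
  rfl

lemma Fintype.prod_bool_insertNth {M : Type*} [CommMonoid M] {m : ℕ} (i : Fin (m + 1))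
    (F : (Fin (m + 1) → Bool) → M) :
    ∏ ε, F ε = (∏ ε, F (i.insertNth false ε)) * ∏ ε, F (i.insertNth true ε) := by
  rw [← Fintype.prod_equiv (Fin.insertNthEquiv (fun _ => Bool) i) _ F (fun _ => rfl),
    Fintype.prod_prod_type, Fintype.prod_bool, mul_comm]
  rfl

lemma Finset.sum_piFinset_piFinset_cons {α M : Type*} [AddCommMonoid M] {k d : ℕ} (s : Finset α)
    (F : (Fin k → Fin (d + 1) → α) → M) :
    ∑ h ∈ Fintype.piFinset (fun _ : Fin k => Fintype.piFinset fun _ : Fin (d + 1) => s), F h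
      = ∑ η ∈ Fintype.piFinset (fun _ : Fin k => s),
          ∑ h ∈ Fintype.piFinset (fun _ : Fin k => Fintype.piFinset fun _ : Fin d => s),
            F (fun i => Fin.cons (η i) (h i)) := by
  rw [← Finset.sum_product']
  refine Finset.sum_nbij' (fun h => (fun i => h i 0, fun i => Fin.tail (h i)))
    (fun p i => Fin.cons (p.1 i) (p.2 i)) ?_ ?_ ?_ ?_ ?_ <;>
    simp +contextual [Fintype.mem_piFinset, Fin.forall_fin_succ, Fin.tail]

section Scalar

open Real

lemma Real.sum_rpow_le_rpow_sum {ι : Type*} (s : Finset ι) {v : ι → ℝ} (hv : ∀ i, 0 ≤ v i)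
    {r : ℝ} (hr : 1 ≤ r) : ∑ i ∈ s, v i ^ r ≤ (∑ i ∈ s, v i) ^ r := by
  classical
  induction s using Finset.induction_on with
  | empty => simp [zero_rpow (by linarith : r ≠ 0)]
  | insert a s ha ih =>
    rw [Finset.sum_insert ha, Finset.sum_insert ha]
    exact (add_le_add le_rfl ih).trans
      (add_rpow_le_rpow_add (hv a) (Finset.sum_nonneg fun i _ => hv i) hr)

lemma Real.sum_rpow_rpow_one_div_le {ι : Type*} (s : Finset ι) {v : ι → ℝ} (hv : ∀ i, 0 ≤ v i)
    {p q : ℝ} (hp : 0 < p) (hpq : p ≤ q) :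
    (∑ i ∈ s, v i ^ q) ^ (1 / q) ≤ (∑ i ∈ s, v i ^ p) ^ (1 / p) := by
  have hq : 0 < q := hp.trans_le hpq
  have hsum : ∑ i ∈ s, v i ^ q ≤ (∑ i ∈ s, v i ^ p) ^ (q / p) := by
    have := sum_rpow_le_rpow_sum s (fun i => rpow_nonneg (hv i) p)
      ((one_le_div hp).2 hpq)
    simpa only [← rpow_mul (hv _), mul_div_cancel₀ q hp.ne'] using this
  calc (∑ i ∈ s, v i ^ q) ^ (1 / q) ≤ ((∑ i ∈ s, v i ^ p) ^ (q / p)) ^ (1 / q) := by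
        gcongr
        exact Finset.sum_nonneg fun i _ => rpow_nonneg (hv i) q
    _ = (∑ i ∈ s, v i ^ p) ^ (1 / p) := by
        rw [← rpow_mul (Finset.sum_nonneg fun i _ => rpow_nonneg (hv i) p)]
        field_simp

lemma rpow_sub_one_le_sub_one_mul_add_one_rpow {q t : ℝ} (hq : 1 ≤ q) (ht : 2 ≤ t) :
    q ^ t - 1 ≤ (q - 1) * (q + 1) ^ (t - 1) := by
  have hq0 : 0 < q := by linarith
  obtain ⟨x, hx0, hqx⟩ : ∃ x, 0 < x ∧ q * x = 1 := ⟨q⁻¹, inv_pos.2 hq0, mul_inv_cancel₀ hq0.ne'⟩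
  have hbern₁ : 1 + (t - 1) * x ≤ (1 + x) ^ (t - 1) :=
    one_add_mul_self_le_rpow_one_add (by linarith) (by linarith)
  have hbern₂ : 1 + (t - 1) * (x - 1) ≤ x ^ (t - 1) := by
    simpa using
      one_add_mul_self_le_rpow_one_add (s := x - 1) (by linarith) (p := t - 1) (by linarith)
  have hqt : q ^ t = q * q ^ (t - 1) := by
    rw [← rpow_one_add' hq0.le (by linarith), add_sub_cancel]
  set Q := q ^ (t - 1)
  have hQ0 : 0 ≤ Q := rpow_nonneg hq0.le _
  have hQx : Q * x ^ (t - 1) = 1 := by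
    rw [← mul_rpow hq0.le hx0.le, hqx, one_rpow]
  have hsucc : (q + 1) ^ (t - 1) = Q * (1 + x) ^ (t - 1) := by
    rw [← mul_rpow hq0.le (by positivity), mul_add, hqx, mul_one]
  have h₁ := mul_le_mul_of_nonneg_left hbern₁ (mul_nonneg (sub_nonneg.2 hq) hQ0)
  have h₂ := mul_le_mul_of_nonneg_left hbern₂ hQ0
  rw [hsucc, hqt]
  linear_combination h₁ + h₂ + hQx - (t - 1) * Q * hqx

lemma two_rpow_sub_two_mul_rpow_half_le {q t : ℝ} (hq : 1 ≤ q) (ht : 2 ≤ t) :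
    (2 ^ t - 2) * q ^ (t / 2) ≤ (q + 1) ^ t - q ^ t - 1 := by
  set K : ℝ → ℝ := fun y => y ^ (-(t / 2)) * ((y + 1) ^ t - y ^ t - 1)
  have hK : ∀ y, 0 < y → HasDerivAt K
      (t / 2 * y ^ (-(t / 2) - 1) * ((y - 1) * (y + 1) ^ (t - 1) - y ^ t + 1)) y := by
    intro y hy
    have hy1 : 0 < y + 1 := by linarith
    have hsucc : HasDerivAt (fun y => (y + 1) ^ t) (1 * t * (y + 1) ^ (t - 1)) y :=
      ((hasDerivAt_id y).add_const 1).rpow_const (Or.inl hy1.ne')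
    have hpow : HasDerivAt (fun y => y ^ t) (t * y ^ (t - 1)) y :=
      hasDerivAt_rpow_const (Or.inl hy.ne')
    have hneg : HasDerivAt (fun y => y ^ (-(t / 2))) (-(t / 2) * y ^ (-(t / 2) - 1)) y :=
      hasDerivAt_rpow_const (Or.inl hy.ne')
    refine (hneg.mul ((hsucc.sub hpow).sub_const 1)).congr_deriv ?_
    simp only [Pi.sub_apply, rpow_sub_one hy.ne', rpow_sub_one hy1.ne']
    field_simp
    ring
  have hmono : MonotoneOn K (Set.Ici 1) := by
    refine monotoneOn_of_hasDerivWithinAt_nonneg (convex_Ici 1)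
      (fun y hy => (hK y (by simp at hy; linarith)).continuousAt.continuousWithinAt)
      (fun y hy => (hK y (by simp at hy; linarith)).hasDerivWithinAt) fun y hy => ?_
    rw [interior_Ici, Set.mem_Ioi] at hy
    have := rpow_sub_one_le_sub_one_mul_add_one_rpow hy.le ht
    have : 0 ≤ y ^ (-(t / 2) - 1) := rpow_nonneg (by linarith) _
    have : 0 ≤ (y - 1) * (y + 1) ^ (t - 1) - y ^ t + 1 := by linarith
    positivity
  have hK1 : K 1 = 2 ^ t - 2 := by norm_num [K]; ring
  have hKq := hmono (Set.mem_Ici.2 le_rfl) (Set.mem_Ici.2 hq) hq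
  rw [hK1] at hKq
  calc (2 ^ t - 2) * q ^ (t / 2) ≤ K q * q ^ (t / 2) :=
        mul_le_mul_of_nonneg_right hKq (rpow_nonneg (by linarith) _)
    _ = (q + 1) ^ t - q ^ t - 1 := by
        rw [mul_comm, ← mul_assoc, ← rpow_add (by linarith)]
        simp

lemma rpow_add_rpow_add_mul_rpow_half_le_add_rpow {a b t : ℝ} (ha : 0 ≤ a) (hb : 0 ≤ b)
    (ht : 2 ≤ t) : a ^ t + b ^ t + (2 ^ t - 2) * (a * b) ^ (t / 2) ≤ (a + b) ^ t := by
  wlog hba : b ≤ a generalizing a b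
  · have := this hb ha (le_of_not_ge hba)
    rw [add_comm b, mul_comm b] at this
    linarith
  rcases hb.eq_or_lt with rfl | hb0
  · simp [zero_rpow (by linarith : t ≠ 0), zero_rpow (by linarith : t / 2 ≠ 0)]
  have hq : 1 ≤ a / b := (one_le_div hb0).2 hba
  have key := two_rpow_sub_two_mul_rpow_half_le hq ht
  have hbt : b ^ t = (b * b) ^ (t / 2) := by
    rw [← sq, ← rpow_natCast, ← rpow_mul hb]
    ring_nf
  have e₁ : b ^ t * (a / b + 1) ^ t = (a + b) ^ t := by
    rw [← mul_rpow hb (by positivity)]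
    field_simp
  have e₂ : b ^ t * (a / b) ^ t = a ^ t := by
    rw [← mul_rpow hb (by positivity)]
    field_simp
  have e₃ : b ^ t * (a / b) ^ (t / 2) = (a * b) ^ (t / 2) := by
    rw [hbt, ← mul_rpow (by positivity) (by positivity)]
    congr 1
    field_simp
  calc a ^ t + b ^ t + (2 ^ t - 2) * (a * b) ^ (t / 2)
      = a ^ t + b ^ t + b ^ t * ((2 ^ t - 2) * (a / b) ^ (t / 2)) := by rw [← e₃]; ring
    _ ≤ a ^ t + b ^ t + b ^ t * ((a / b + 1) ^ t - (a / b) ^ t - 1) := by gcongr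
    _ = (a + b) ^ t := by rw [mul_sub, mul_sub, e₁, e₂]; ring

end Scalar

lemma norm_iterate_conj (n : ℕ) (z : ℂ) : ‖(fun z : ℂ => (starRingEnd ℂ) z)^[n] z‖ = ‖z‖ :=
  congrFun (Function.iterate_invariant (funext Complex.norm_conj) n) z

lemma lpnorm_eq_sum {G : Type*} {A : Finset G} (p : ℝ) (hp : p ≠ 0) (f : G → ℂ)
    (hf : ∀ x ∉ A, f x = 0) :
    lpnorm p f = (∑ x ∈ A, ‖f x‖ ^ p) ^ (1 / p) := by
  rw [lpnorm, tsum_eq_sum fun x hx => by simp [hf x hx, Real.zero_rpow hp]]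

section Cube

variable {G : Type*} [AddCommGroup G]

def cubeVertex {k : ℕ} (ε : Fin k → Bool) (h : Fin k → G) : G :=
  ∑ i, if ε i then h i else 0

/-- The Gowers box form with `a` restricted to `A`, the steps `h` to `H^k`, and a weight
depending on the vertex `ε`. -/
noncomputable def boxSum {k : ℕ} (A H : Finset G) (w : (Fin k → Bool) → G → ℝ) : ℝ :=
  ∑ a ∈ A, ∑ h ∈ Fintype.piFinset (fun _ : Fin k => H), ∏ ε, w ε (a + cubeVertex ε h)

@[simp]
lemma cubeVertex_false {k : ℕ} (h : Fin k → G) : cubeVertex (fun _ => false) h = 0 := by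
  simp [cubeVertex]

lemma cubeVertex_insertNth {m : ℕ} (i : Fin (m + 1)) (c : Bool) (ε : Fin m → Bool) (γ : G)
    (h : Fin m → G) :
    cubeVertex (i.insertNth c ε) (i.insertNth γ h) = (if c then γ else 0) + cubeVertex ε h := by
  simp [cubeVertex, Fin.sum_univ_succAbove _ i]

lemma cubeVertex_mem {k : ℕ} (s : Finset (Fin k)) (h : Fin k → G) :
    cubeVertex (fun l => decide (l ∈ s)) h = ∑ l ∈ s, h l := by
  simp [cubeVertex, Finset.sum_ite_mem]

lemma cubeVertex_single {k : ℕ} (ε : Fin k → Bool) (i : Fin k) (c : G) :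
    cubeVertex ε (Pi.single i c) = if ε i then c else 0 := by
  rw [cubeVertex, Finset.sum_eq_single i (fun j _ hj => by simp [hj]) (by simp)]
  simp

lemma cubeVertex_cons {k d : ℕ} (ε : Fin k → Bool) (η : Fin k → G) (h : Fin k → Fin d → G) :
    cubeVertex ε (fun i => (Fin.cons (η i) (h i) : Fin (d + 1) → G))
      = Fin.cons (cubeVertex ε η) (cubeVertex ε h) := by
  ext j
  cases j using Fin.cases <;> simp [cubeVertex, Finset.sum_apply, ite_apply]

variable {A H : Finset G}

lemma boxSum_nonneg {k : ℕ} {w : (Fin k → Bool) → G → ℝ} (hw : ∀ ε x, 0 ≤ w ε x) :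
    0 ≤ boxSum A H w :=
  Finset.sum_nonneg fun _ _ => Finset.sum_nonneg fun _ _ => Finset.prod_nonneg fun _ _ => hw _ _

lemma sum_add_eq_sum_of_sub_mem {M : Type*} [AddCommMonoid M]
    (hAH : ∀ a ∈ A, ∀ y ∈ A, y - a ∈ H) {g : G → M} (hg : ∀ x ∉ A, g x = 0) {a : G}
    (ha : a ∈ A) : ∑ γ ∈ H, g (a + γ) = ∑ y ∈ A, g y := by
  have hA : A ⊆ H.map (addLeftEmbedding a) := fun y hy =>
    Finset.mem_map.2 ⟨y - a, hAH a ha y hy, add_sub_cancel a y⟩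
  exact (Finset.sum_map H (addLeftEmbedding a) g).symm.trans
    (Finset.sum_subset hA fun y _ hy => hg y hy).symm

/-- Split `h = (h_i, h')`: as `A - A ⊆ H`, the vertex `a + h_i` runs over all of `A`. -/
lemma boxSum_apply_eq_sum_mul {m : ℕ} (i : Fin (m + 1)) (hAH : ∀ a ∈ A, ∀ y ∈ A, y - a ∈ H)
    (w : Bool → G → ℝ) (hw : ∀ c, ∀ x ∉ A, w c x = 0) :
    boxSum A H (fun ε => w (ε i))
      = ∑ h ∈ Fintype.piFinset (fun _ : Fin m => H),
          (∑ a ∈ A, ∏ ε, w false (a + cubeVertex ε h))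
            * ∑ a ∈ A, ∏ ε, w true (a + cubeVertex ε h) := by
  have hsupp : ∀ h : Fin m → G, ∀ y ∉ A, ∏ ε, w true (y + cubeVertex ε h) = 0 := fun h y hy =>
    Finset.prod_eq_zero (Finset.mem_univ fun _ => false) (by simpa using hw true y hy)
  calc boxSum A H (fun ε => w (ε i))
      = ∑ a ∈ A, ∑ h ∈ Fintype.piFinset (fun _ : Fin m => H), ∑ γ ∈ H,
          (∏ ε, w false (a + cubeVertex ε h)) * ∏ ε, w true (a + γ + cubeVertex ε h) := by
        refine Finset.sum_congr rfl fun a _ => ?_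
        rw [Finset.sum_piFinset_const_insertNth i, Finset.sum_comm]
        refine Finset.sum_congr rfl fun h _ => Finset.sum_congr rfl fun γ _ => ?_
        simp [Fintype.prod_bool_insertNth i, cubeVertex_insertNth, add_assoc]
    _ = ∑ a ∈ A, ∑ h ∈ Fintype.piFinset (fun _ : Fin m => H),
          (∏ ε, w false (a + cubeVertex ε h)) * ∑ y ∈ A, ∏ ε, w true (y + cubeVertex ε h) := by
        refine Finset.sum_congr rfl fun a ha => Finset.sum_congr rfl fun h _ => ?_
        rw [← Finset.mul_sum, sum_add_eq_sum_of_sub_mem hAH (hsupp h) ha]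
    _ = _ := by
        rw [Finset.sum_comm]
        simp only [Finset.sum_mul]

lemma boxSum_le_sqrt_mul_sqrt {k : ℕ} (i : Fin k) (hAH : ∀ a ∈ A, ∀ y ∈ A, y - a ∈ H)
    (w : Bool → G → ℝ) (hw : ∀ c, ∀ x ∉ A, w c x = 0) :
    boxSum A H (fun ε => w (ε i))
      ≤ √(boxSum A H fun (_ : Fin k → Bool) => w false)
        * √(boxSum A H fun (_ : Fin k → Bool) => w true) := by
  obtain ⟨m, rfl⟩ : ∃ m, k = m + 1 := ⟨k - 1, by have := i.pos; omega⟩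
  have hsq : ∀ c, boxSum A H (fun (_ : Fin (m + 1) → Bool) => w c)
      = ∑ h ∈ Fintype.piFinset (fun _ : Fin m => H), (∑ a ∈ A, ∏ ε, w c (a + cubeVertex ε h)) ^ 2 :=
    fun c => by
    simpa [sq] using boxSum_apply_eq_sum_mul i hAH (fun _ => w c) (fun _ => hw c)
  rw [boxSum_apply_eq_sum_mul i hAH w hw, hsq, hsq]
  exact Real.sum_mul_le_sqrt_mul_sqrt _ _ _

lemma gbox_eq_sum {k : ℕ} (hAH : ∀ a ∈ A, ∀ y ∈ A, y - a ∈ H) (f : G → ℂ)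
    (hf : ∀ x ∉ A, f x = 0) :
    gbox k f = ∑ a ∈ A, ∑ h ∈ Fintype.piFinset (fun _ : Fin k => H), ∏ ε : Fin k → Bool,
      (fun z : ℂ => (starRingEnd ℂ) z)^[(Finset.univ.filter fun i => ε i = true).card]
        (f (a + cubeVertex ε h)) := by
  set T : G → (Fin k → G) → ℂ := fun a h => ∏ ε : Fin k → Bool,
    (fun z : ℂ => (starRingEnd ℂ) z)^[(Finset.univ.filter fun i => ε i = true).card]
      (f (a + cubeVertex ε h))
  have hT : ∀ a h ε, a + cubeVertex ε h ∉ A → T a h = 0 := fun a h ε hε =>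
    Finset.prod_eq_zero (Finset.mem_univ ε)
      (by rw [hf _ hε]; exact Function.iterate_fixed (map_zero _) _)
  have hout : ∀ a ∉ A, ∀ h, T a h = 0 := fun a ha h => hT a h (fun _ => false) (by simpa)
  have hin : ∀ a ∈ A, ∀ h ∉ Fintype.piFinset (fun _ : Fin k => H), T a h = 0 := by
    intro a ha h hh
    obtain ⟨i, hi⟩ := not_forall.1 (mt Fintype.mem_piFinset.2 hh)
    refine hT a h (fun l => decide (l ∈ ({i} : Finset (Fin k)))) fun hmem => hi ?_
    rw [cubeVertex_mem, Finset.sum_singleton] at hmem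
    simpa using hAH a ha _ hmem
  simp only [gbox, Finset.sum_filter]
  change ∑' a, ∑' h, T a h = ∑ a ∈ A, ∑ h ∈ Fintype.piFinset (fun _ : Fin k => H), T a h
  rw [tsum_eq_sum fun a ha => by simp [hout a ha]]
  exact Finset.sum_congr rfl fun a ha => tsum_eq_sum (hin a ha)

lemma gnorm_le_boxSum_rpow {k : ℕ} (hAH : ∀ a ∈ A, ∀ y ∈ A, y - a ∈ H) (f : G → ℂ)
    (hf : ∀ x ∉ A, f x = 0) :
    gnorm k f ≤ boxSum A H (fun (_ : Fin k → Bool) x => ‖f x‖) ^ ((1 : ℝ) / 2 ^ k) := by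
  refine Real.rpow_le_rpow (norm_nonneg _) ?_ (by positivity)
  rw [gbox_eq_sum hAH f hf, boxSum]
  refine (norm_sum_le _ _).trans (Finset.sum_le_sum fun a _ => (norm_sum_le _ _).trans ?_)
  simp [norm_iterate_conj]

end Cube

def binaryCube (d : ℕ) : Finset (Fin d → ℤ) := Fintype.piFinset fun _ => {0, 1}

def signCube (d : ℕ) : Finset (Fin d → ℤ) := Fintype.piFinset fun _ => {-1, 0, 1}

/-- `binaryBox k u = ‖u‖_{U^k}^{2^k}` for `u` supported in `binaryCube d`. -/
noncomputable def binaryBox (k : ℕ) {d : ℕ} (u : (Fin d → ℤ) → ℝ) : ℝ :=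
  boxSum (binaryCube d) (signCube d) fun (_ : Fin k → Bool) => u

lemma mem_binaryCube_iff_mem_cube {d : ℕ} {x : Fin d → ℤ} : x ∈ binaryCube d ↔ x ∈ cube 2 d := by
  simp only [binaryCube, cube, Fintype.mem_piFinset, Finset.mem_insert, Finset.mem_singleton,
    Set.mem_ofPred_eq]
  exact forall_congr' fun i => by omega

lemma sub_mem_signCube {d : ℕ} : ∀ a ∈ binaryCube d, ∀ y ∈ binaryCube d, y - a ∈ signCube d := by
  simp only [binaryCube, signCube, Fintype.mem_piFinset, Finset.mem_insert, Finset.mem_singleton,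
    Pi.sub_apply]
  intro a ha y hy j
  have := ha j; have := hy j
  omega

lemma cons_mem_binaryCube {d : ℕ} {b : ℤ} {x : Fin d → ℤ} :
    (Fin.cons b x : Fin (d + 1) → ℤ) ∈ binaryCube (d + 1)
      ↔ b ∈ ({0, 1} : Finset ℤ) ∧ x ∈ binaryCube d := by
  simp [binaryCube, Fin.forall_fin_succ]

lemma boxSum_binaryCube_succ {k d : ℕ} (w : (Fin k → Bool) → (Fin (d + 1) → ℤ) → ℝ) :
    boxSum (binaryCube (d + 1)) (signCube (d + 1)) w
      = ∑ b ∈ ({0, 1} : Finset ℤ),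
          ∑ η ∈ Fintype.piFinset (fun _ : Fin k => ({-1, 0, 1} : Finset ℤ)),
            boxSum (binaryCube d) (signCube d)
              fun ε x => w ε (Fin.cons (b + cubeVertex ε η) x) := by
  simp only [boxSum, binaryCube, signCube]
  rw [Finset.sum_piFinset_const_insertNth 0]
  refine Finset.sum_congr rfl fun b _ => ?_
  rw [Finset.sum_comm, Finset.sum_piFinset_piFinset_cons]
  refine Finset.sum_congr rfl fun η _ => ?_
  rw [Finset.sum_comm]
  refine Finset.sum_congr rfl fun a _ => Finset.sum_congr rfl fun h _ => ?_
  have hcons : ∀ (c : ℤ) (y : Fin d → ℤ),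
      (Fin.cons b a : Fin (d + 1) → ℤ) + Fin.cons c y = Fin.cons (b + c) (a + y) :=
    fun c y => Matrix.cons_add_cons b a c y
  simp [Fin.insertNth_zero', cubeVertex_cons, hcons]

lemma eq_zero_or_eq_single_of_add_cubeVertex_mem {k : ℕ} {b : ℤ} (hb : b ∈ ({0, 1} : Finset ℤ))
    {η : Fin k → ℤ} (hη : ∀ ε, b + cubeVertex ε η ∈ ({0, 1} : Finset ℤ)) :
    η = 0 ∨ ∃ i, η = Pi.single i (1 - 2 * b) := by
  have hs : ∀ s : Finset (Fin k), b + ∑ l ∈ s, η l = 0 ∨ b + ∑ l ∈ s, η l = 1 := fun s => by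
    simpa [cubeVertex_mem] using hη fun l => decide (l ∈ s)
  simp only [Finset.mem_insert, Finset.mem_singleton] at hb
  refine (eq_or_ne η 0).imp_right fun hne => ?_
  obtain ⟨i, hi⟩ := Function.ne_iff.1 hne
  have hsingle := hs {i}
  simp only [Finset.sum_singleton] at hsingle
  refine ⟨i, funext fun j => ?_⟩
  rcases eq_or_ne j i with rfl | hji
  · simp only [Pi.single_eq_same]
    simp only [Pi.zero_apply] at hi
    omega
  · have hpair := hs {i, j}
    have hj := hs {j}
    simp only [Finset.sum_singleton, Finset.sum_pair hji.symm] at hpair hj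
    simp only [Pi.single_eq_of_ne hji, Pi.zero_apply] at hi ⊢
    omega

section Slice

variable {k d : ℕ} {u : (Fin (d + 1) → ℤ) → ℝ}

lemma boxSum_cons_eq_zero (hu : ∀ x ∉ binaryCube (d + 1), u x = 0) {b : ℤ} {η : Fin k → ℤ}
    (ε : Fin k → Bool) (hε : b + cubeVertex ε η ∉ ({0, 1} : Finset ℤ)) :
    boxSum (binaryCube d) (signCube d) (fun ε x => u (Fin.cons (b + cubeVertex ε η) x)) = 0 :=
  Finset.sum_eq_zero fun _ _ => Finset.sum_eq_zero fun _ _ =>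
    Finset.prod_eq_zero (Finset.mem_univ ε) (hu _ (by simp [cons_mem_binaryCube, hε]))

lemma boxSum_cons_single_le (hu : ∀ x ∉ binaryCube (d + 1), u x = 0) {b : ℤ}
    (hb : b ∈ ({0, 1} : Finset ℤ)) (i : Fin k) :
    boxSum (binaryCube d) (signCube d)
        (fun ε x => u (Fin.cons (b + cubeVertex ε (Pi.single i (1 - 2 * b))) x))
      ≤ √(binaryBox k fun x => u (Fin.cons b x))
        * √(binaryBox k fun x => u (Fin.cons (1 - b) x)) := by
  have hflip : ∀ ε : Fin k → Bool,
      b + cubeVertex ε (Pi.single i (1 - 2 * b)) = if ε i then 1 - b else b := fun ε => by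
    rw [cubeVertex_single]
    split <;> ring
  simp only [hflip]
  refine boxSum_le_sqrt_mul_sqrt i sub_mem_signCube
    (fun c x => u (Fin.cons (if c then 1 - b else b) x)) fun c x hx => hu _ ?_
  have hb' : b = 0 ∨ b = 1 := by simpa using hb
  rcases hb' with rfl | rfl <;> cases c <;> simp [cons_mem_binaryCube, hx]

lemma sum_boxSum_cons_le (hu : ∀ x ∉ binaryCube (d + 1), u x = 0) {b : ℤ}
    (hb : b ∈ ({0, 1} : Finset ℤ)) :
    ∑ η ∈ Fintype.piFinset (fun _ : Fin k => ({-1, 0, 1} : Finset ℤ)),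
        boxSum (binaryCube d) (signCube d) (fun ε x => u (Fin.cons (b + cubeVertex ε η) x))
      ≤ binaryBox k (fun x => u (Fin.cons b x))
        + k * (√(binaryBox k fun x => u (Fin.cons b x))
          * √(binaryBox k fun x => u (Fin.cons (1 - b) x))) := by
  have hb' : b = 0 ∨ b = 1 := by simpa using hb
  have hinj : Function.Injective fun i : Fin k => (Pi.single i (1 - 2 * b) : Fin k → ℤ) :=
    fun i j hij => by
      have := congrFun hij i
      rcases hb' with rfl | rfl <;> simpa [Pi.single_apply, eq_comm] using this
  set S := insert 0 (Finset.univ.image fun i : Fin k => (Pi.single i (1 - 2 * b) : Fin k → ℤ))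
  have hS : S ⊆ Fintype.piFinset (fun _ : Fin k => ({-1, 0, 1} : Finset ℤ)) := by
    intro η hη
    simp only [S, Finset.mem_insert, Finset.mem_image, Finset.mem_univ, true_and] at hη
    rcases hη with rfl | ⟨i, rfl⟩ <;> rcases hb' with rfl | rfl <;>
      simp [Fintype.mem_piFinset, Pi.single_apply, apply_ite]
  rw [← Finset.sum_subset hS fun η _ hη => ?_]
  · have h0 : (0 : Fin k → ℤ) ∉ Finset.univ.image fun i : Fin k => Pi.single i (1 - 2 * b) := by
      simp only [Finset.mem_image, Finset.mem_univ, true_and, not_exists]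
      intro i hi
      have := congrFun hi i
      rcases hb' with rfl | rfl <;> simp at this
    rw [Finset.sum_insert h0, Finset.sum_image fun i _ j _ hij => hinj hij]
    refine add_le_add (le_of_eq (by simp [cubeVertex, binaryBox])) ?_
    refine (Finset.sum_le_sum fun i _ => boxSum_cons_single_le hu hb i).trans ?_
    simp
  · by_contra hne
    obtain ⟨ε, hε⟩ : ∃ ε, b + cubeVertex ε η ∉ ({0, 1} : Finset ℤ) := by
      by_contra! hall
      rcases eq_zero_or_eq_single_of_add_cubeVertex_mem hb hall with rfl | ⟨i, rfl⟩ <;>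
        simp [S] at hη
    exact hne (boxSum_cons_eq_zero hu ε hε)

lemma binaryBox_succ_le (hu : ∀ x ∉ binaryCube (d + 1), u x = 0) :
    binaryBox k u
      ≤ binaryBox k (fun x => u (Fin.cons 0 x)) + binaryBox k (fun x => u (Fin.cons 1 x))
        + 2 * k * (√(binaryBox k fun x => u (Fin.cons 0 x))
          * √(binaryBox k fun x => u (Fin.cons 1 x))) := by
  rw [binaryBox, boxSum_binaryCube_succ, Finset.sum_pair zero_ne_one]
  have h₀ := sum_boxSum_cons_le (k := k) hu (b := 0) (by simp)
  have h₁ := sum_boxSum_cons_le (k := k) hu (b := 1) (by simp)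
  simp only [sub_zero, sub_self] at h₀ h₁
  linarith [mul_comm (√(binaryBox k fun x => u (Fin.cons 0 x)))
    (√(binaryBox k fun x => u (Fin.cons 1 x)))]

end Slice

lemma binaryBox_le_rpow {k : ℕ} {t p : ℝ} (ht : 2 ≤ t) (h2t : (2 : ℝ) ^ t = 2 * k + 2)
    (hpt : p * t = 2 ^ k) (d : ℕ) {u : (Fin d → ℤ) → ℝ} (hu : ∀ x, 0 ≤ u x)
    (hsupp : ∀ x ∉ binaryCube d, u x = 0) :
    binaryBox k u ≤ (∑ x ∈ binaryCube d, u x ^ p) ^ t := by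
  induction d with
  | zero =>
    obtain ⟨c, hc⟩ : ∃ c, ∀ x, u x = c := ⟨u 0, fun x => congrArg u (Subsingleton.elim x 0)⟩
    simp only [binaryBox, boxSum, binaryCube, signCube, Fintype.piFinset_of_isEmpty,
      Finset.univ_unique, Fintype.piFinset_singleton, hc, Finset.prod_const, Finset.card_univ,
      Fintype.card_pi, Fintype.card_bool, Fintype.card_fin, Finset.sum_const,
      Finset.card_singleton, one_smul]
    rw [← Real.rpow_mul (hc 0 ▸ hu 0), hpt,
      show (2 : ℝ) ^ k = ((2 ^ k : ℕ) : ℝ) by push_cast; ring, Real.rpow_natCast]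
  | succ d ih =>
    set α := ∑ x ∈ binaryCube d, u (Fin.cons 0 x) ^ p
    set β := ∑ x ∈ binaryCube d, u (Fin.cons 1 x) ^ p
    have hα : 0 ≤ α := Finset.sum_nonneg fun x _ => Real.rpow_nonneg (hu _) p
    have hβ : 0 ≤ β := Finset.sum_nonneg fun x _ => Real.rpow_nonneg (hu _) p
    have ih₀ := ih (u := fun x => u (Fin.cons 0 x)) (fun x => hu _)
      fun x hx => hsupp _ (by simp [cons_mem_binaryCube, hx])
    have ih₁ := ih (u := fun x => u (Fin.cons 1 x)) (fun x => hu _)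
      fun x hx => hsupp _ (by simp [cons_mem_binaryCube, hx])
    have hsqrt : ∀ {B γ : ℝ}, 0 ≤ γ → B ≤ γ ^ t → √B ≤ γ ^ (t / 2) := by
      intro B γ hγ hB
      calc √B ≤ √(γ ^ t) := Real.sqrt_le_sqrt hB
        _ = γ ^ (t / 2) := by rw [Real.sqrt_eq_rpow, ← Real.rpow_mul hγ]; ring_nf
    have hsum : ∑ x ∈ binaryCube (d + 1), u x ^ p = α + β := by
      rw [binaryCube, Finset.sum_piFinset_const_insertNth 0, Finset.sum_pair zero_ne_one]
      simp [α, β, binaryCube, Fin.insertNth_zero']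
    calc binaryBox k u
        ≤ α ^ t + β ^ t + (2 ^ t - 2) * (α ^ (t / 2) * β ^ (t / 2)) := by
          refine (binaryBox_succ_le hsupp).trans ?_
          rw [h2t, add_sub_cancel_right]
          have := hsqrt hα ih₀
          have := hsqrt hβ ih₁
          gcongr
      _ ≤ (∑ x ∈ binaryCube (d + 1), u x ^ p) ^ t := by
          rw [hsum, ← Real.mul_rpow hα hβ]
          exact rpow_add_rpow_add_mul_rpow_half_le_add_rpow hα hβ ht

lemma two_le_logb_two_mul_add_two {k : ℕ} (hk : 1 ≤ k) : 2 ≤ Real.logb 2 (2 * (k : ℝ) + 2) := by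
  have hk' : (1 : ℝ) ≤ k := by exact_mod_cast hk
  rw [Real.le_logb_iff_rpow_le (by norm_num) (by positivity)]
  norm_num
  linarith

theorem gowers_lp_binary_cube (d k : ℕ) (hk : 2 ≤ k) (f : (Fin d → ℤ) → ℂ)
    (hf : ∀ x, x ∉ cube 2 d → f x = 0)
    (p : ℝ) (hp : 0 < p) (hp' : p ≤ (2 : ℝ) ^ k / Real.logb 2 (2 * (k : ℝ) + 2)) :
    gnorm k f ≤ lpnorm p f := by
  set t := Real.logb 2 (2 * (k : ℝ) + 2)
  have h2t : (2 : ℝ) ^ t = 2 * k + 2 := Real.rpow_logb (by norm_num) (by norm_num) (by positivity)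
  have ht : 2 ≤ t := two_le_logb_two_mul_add_two (by omega)
  have hsupp : ∀ x ∉ binaryCube d, f x = 0 := fun x hx =>
    hf x (mt mem_binaryCube_iff_mem_cube.2 hx)
  have hpt : 2 ^ k / t * t = 2 ^ k := div_mul_cancel₀ _ (by positivity)
  have hnorm : ∀ x, 0 ≤ ‖f x‖ := fun x => norm_nonneg _
  calc gnorm k f
      ≤ binaryBox k (fun x => ‖f x‖) ^ ((1 : ℝ) / 2 ^ k) :=
        gnorm_le_boxSum_rpow sub_mem_signCube f hsupp
    _ ≤ ((∑ x ∈ binaryCube d, ‖f x‖ ^ (2 ^ k / t)) ^ t) ^ ((1 : ℝ) / 2 ^ k) := by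
        gcongr
        · exact boxSum_nonneg fun _ x => hnorm x
        · exact binaryBox_le_rpow ht h2t hpt d hnorm fun x hx => by simp [hsupp x hx]
    _ = (∑ x ∈ binaryCube d, ‖f x‖ ^ (2 ^ k / t)) ^ (1 / (2 ^ k / t)) := by
        rw [← Real.rpow_mul (Finset.sum_nonneg fun x _ => Real.rpow_nonneg (hnorm x) _),
          one_div_div]
        ring_nf
    _ ≤ (∑ x ∈ binaryCube d, ‖f x‖ ^ p) ^ (1 / p) := Real.sum_rpow_rpow_one_div_le _ hnorm hp hp'
    _ = lpnorm p f := (lpnorm_eq_sum p hp.ne' f hsupp).symm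
end

section
/- Let d ≥ 0 and k ≥ 2 be integers. For every subset A of the binary cube {0,1}^d ⊆ ℤ^d one has P_k(A) ≤ |A|^{log₂(2k+2)}. -/
open scoped BigOperators

/-- The generalized additive energy
`P_k(A) = |{(a,h₁,…,h_k) : a+ε₁h₁+⋯+ε_kh_k ∈ A for all ε ∈ {0,1}^k}|`. -/
noncomputable def Pk (k : ℕ) {d : ℕ} (A : Set (Fin d → ℤ)) : ℕ :=
  Set.ncard {p : (Fin d → ℤ) × (Fin k → Fin d → ℤ) |
    ∀ ε : Fin k → Bool,
      p.1 + ∑ i ∈ Finset.univ.filter (fun i => ε i = true), p.2 i ∈ A}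

/-!
Induct on `|A|`, splitting `A` along a coordinate on which it is not constant into the level
sets `A₀` and `A₁`. A parallelepiped `(a, h)` in `A` either lies in `A₀` or in `A₁`, or exactly
one increment `h i` changes that coordinate, and then one facet lies in `A₀` and the opposite one
in `A₁` (or vice versa). For fixed `i` and fixed other increments, these straddling
parallelepipeds are parametrised by a pair of base points of the two facets, so Cauchy–Schwarz
bounds their number by `√(P_k(A₀) P_k(A₁))`. Hence
`P_k(A) ≤ P_k(A₀) + P_k(A₁) + 2k √(P_k(A₀) P_k(A₁))`, and with `2 ^ p = 2k + 2` the two-point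
inequality `x^p + y^p + (2^p - 2) (xy)^(p/2) ≤ (x + y)^p`, valid once `2 ^ p ≥ 6`, closes the
induction. By homogeneity, that inequality is the monotonicity of
`u ↦ (u + u⁻¹)^p - u^p - u^(-p)` on `[1, ∞)`.
-/

open Function Set

lemma Set.ncard_eq_sum_ncard_inter_preimage {α β : Type*} [DecidableEq β] {s : Set α}
    (hs : s.Finite) (π : α → β) {G : Finset β} (hG : ∀ a ∈ s, π a ∈ G) :
    s.ncard = ∑ b ∈ G, (s ∩ π ⁻¹' {b}).ncard := by
  rw [ncard_eq_toFinset_card s hs,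
    Finset.card_eq_sum_card_fiberwise fun a ha => hG a (hs.mem_toFinset.mp ha)]
  refine Finset.sum_congr rfl fun b _ => ?_
  rw [← ncard_coe_finset]
  congr
  ext a
  simp

lemma Set.ncard_sq_le_mul_of_fibers {α β : Type*} {s t u : Set α} (hs : s.Finite)
    (ht : t.Finite) (hu : u.Finite) (π : α → β) (m n : β → ℕ)
    (hsπ : ∀ b ∈ range π, (s ∩ π ⁻¹' {b}).ncard = m b * n b)
    (htπ : ∀ b ∈ range π, (t ∩ π ⁻¹' {b}).ncard = m b * m b)
    (huπ : ∀ b ∈ range π, (u ∩ π ⁻¹' {b}).ncard = n b * n b) :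
    s.ncard ^ 2 ≤ t.ncard * u.ncard := by
  classical
  set G := (hs.union (ht.union hu)).toFinset.image π
  have hGπ : ∀ b ∈ G, b ∈ range π := by
    intro b hb
    obtain ⟨a, -, rfl⟩ := Finset.mem_image.mp hb
    exact mem_range_self a
  have hG : ∀ a ∈ s ∪ (t ∪ u), π a ∈ G := fun a ha =>
    Finset.mem_image_of_mem π ((hs.union (ht.union hu)).mem_toFinset.mpr ha)
  rw [ncard_eq_sum_ncard_inter_preimage hs π fun a ha => hG a (Or.inl ha),
    ncard_eq_sum_ncard_inter_preimage ht π fun a ha => hG a (Or.inr (Or.inl ha)),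
    ncard_eq_sum_ncard_inter_preimage hu π fun a ha => hG a (Or.inr (Or.inr ha)),
    Finset.sum_congr rfl fun b hb => hsπ b (hGπ b hb),
    Finset.sum_congr rfl fun b hb => htπ b (hGπ b hb),
    Finset.sum_congr rfl fun b hb => huπ b (hGπ b hb)]
  simpa only [sq] using Finset.sum_mul_sq_le_sq_mul_sq G m n

section Parallelepipeds

variable {V : Type*} [AddCommGroup V]

def parallelepipeds (k : ℕ) (A : Set V) : Set (V × (Fin k → V)) :=
  {p | ∀ S : Finset (Fin k), p.1 + ∑ j ∈ S, p.2 j ∈ A}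

def straddlingParallelepipeds {k : ℕ} (i : Fin k) (B C : Set V) : Set (V × (Fin k → V)) :=
  {p | ∀ S : Finset (Fin k), p.1 + ∑ j ∈ S, p.2 j ∈ if i ∈ S then C else B}

def facetBases {k : ℕ} (i : Fin k) (B : Set V) (g : Fin k → V) : Set V :=
  {a | ∀ S : Finset (Fin k), i ∉ S → a + ∑ j ∈ S, g j ∈ B}

variable {k : ℕ}

lemma parallelepipeds_mono {A B : Set V} (h : A ⊆ B) :
    parallelepipeds k A ⊆ parallelepipeds k B :=
  fun _ hp S => h (hp S)

open scoped Pointwise in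
lemma parallelepipeds_subset_prod (A : Set V) :
    parallelepipeds k A ⊆ A ×ˢ univ.pi fun _ => A - A := by
  intro p hp
  refine ⟨by simpa using hp ∅, fun j _ => ⟨_, by simpa using hp {j}, _, by simpa using hp ∅, ?_⟩⟩
  simp

lemma parallelepipeds_finite {A : Set V} (hA : A.Finite) : (parallelepipeds k A).Finite :=
  (hA.prod (Finite.pi fun _ => hA.sub hA)).subset (parallelepipeds_subset_prod A)

@[simp]
lemma parallelepipeds_empty : parallelepipeds k (∅ : Set V) = ∅ :=
  eq_empty_of_forall_notMem fun _ hp => hp ∅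

@[simp]
lemma parallelepipeds_singleton (a : V) : parallelepipeds k {a} = {(a, 0)} := by
  ext ⟨b, h⟩
  refine ⟨fun hp => ?_, ?_⟩
  · have hb : b = a := by simpa using hp ∅
    subst hb
    refine Prod.ext rfl (funext fun j => ?_)
    simpa using hp {j}
  · rintro ⟨⟩ S
    simp

lemma straddlingParallelepipeds_self (i : Fin k) (A : Set V) :
    straddlingParallelepipeds i A A = parallelepipeds k A := by
  simp [straddlingParallelepipeds, parallelepipeds]

lemma straddlingParallelepipeds_subset (i : Fin k) (B C : Set V) :
    straddlingParallelepipeds i B C ⊆ parallelepipeds k (B ∪ C) := by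
  intro p hp S
  have := hp S
  split_ifs at this
  exacts [Or.inr this, Or.inl this]

lemma straddlingParallelepipeds_inter_fiber (i : Fin k) (B C : Set V) {g : Fin k → V}
    (hg : g i = 0) :
    straddlingParallelepipeds i B C ∩ (fun p => update p.2 i 0) ⁻¹' {g} =
      (fun ac : V × V => (ac.1, update g i (ac.2 - ac.1))) ''
        (facetBases i B g ×ˢ facetBases i C g) := by
  ext ⟨a, h⟩
  constructor
  · rintro ⟨hp, rfl : update h i 0 = g⟩
    have hsum : ∀ S : Finset (Fin k), i ∉ S → ∑ j ∈ S, update h i 0 j = ∑ j ∈ S, h j :=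
      fun S hS => Finset.sum_update_of_notMem hS h 0
    refine ⟨(a, a + h i), ⟨fun S hS => ?_, fun S hS => ?_⟩, ?_⟩
    · simpa [hsum S hS, hS] using hp S
    · simpa [hsum S hS, Finset.sum_insert hS, add_assoc] using hp (insert i S)
    · simp
  · rintro ⟨⟨a', c⟩, ⟨ha, hc⟩, hp⟩
    obtain ⟨rfl, rfl⟩ := Prod.mk.inj hp
    refine ⟨fun S => ?_, by simp [hg]⟩
    split_ifs with hS
    · have := hc (S \ {i}) (by simp)
      rwa [Finset.sum_update_of_mem hS, ← add_assoc, add_sub_cancel]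
    · rw [Finset.sum_update_of_notMem hS]
      exact ha S hS

lemma ncard_straddlingParallelepipeds_inter_fiber (i : Fin k) (B C : Set V) {g : Fin k → V}
    (hg : g i = 0) :
    (straddlingParallelepipeds i B C ∩ (fun p => update p.2 i 0) ⁻¹' {g}).ncard =
      (facetBases i B g).ncard * (facetBases i C g).ncard := by
  rw [straddlingParallelepipeds_inter_fiber i B C hg, ncard_image_of_injective, ncard_prod]
  rintro ⟨a, c⟩ ⟨a', c'⟩ h
  obtain ⟨rfl, h⟩ := Prod.mk.inj h
  simpa using congrFun h i

lemma ncard_straddlingParallelepipeds_sq_le (i : Fin k) {B C : Set V} (hB : B.Finite)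
    (hC : C.Finite) :
    (straddlingParallelepipeds i B C).ncard ^ 2 ≤
      (parallelepipeds k B).ncard * (parallelepipeds k C).ncard := by
  have hfiber (D E : Set V) : ∀ g ∈ range fun p : V × (Fin k → V) => update p.2 i 0,
      (straddlingParallelepipeds i D E ∩ (fun p => update p.2 i 0) ⁻¹' {g}).ncard =
        (facetBases i D g).ncard * (facetBases i E g).ncard := by
    rintro _ ⟨p, rfl⟩
    exact ncard_straddlingParallelepipeds_inter_fiber i D E (by simp)
  refine ncard_sq_le_mul_of_fibers ((parallelepipeds_finite (hB.union hC)).subset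
    (straddlingParallelepipeds_subset i B C)) (parallelepipeds_finite hB)
    (parallelepipeds_finite hC) _ _ _ (hfiber B C) ?_ ?_
  · simpa only [straddlingParallelepipeds_self] using hfiber B B
  · simpa only [straddlingParallelepipeds_self] using hfiber C C

end Parallelepipeds

section RealInequality

open Real

lemma two_le_of_six_le_two_rpow {p : ℝ} (hp : 6 ≤ (2 : ℝ) ^ p) : 2 ≤ p := by
  rw [← rpow_le_rpow_left_iff (by norm_num : (1 : ℝ) < 2)]
  norm_num
  linarith

lemma one_sub_rpow_le_one_add_rpow_mul_one_sub {p w : ℝ} (hp : 6 ≤ (2 : ℝ) ^ p) (hw0 : 0 ≤ w)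
    (hw1 : w ≤ 1) :
    1 - w ^ p ≤ (1 + w) ^ (p - 1) * (1 - w) := by
  set q := p - 2
  have hq0 : 0 ≤ q := by linarith [two_le_of_six_le_two_rpow hp]
  have hsplit : (1 + w) ^ (p - 1) * (1 - w) = (1 + w) ^ q * (1 - w ^ 2) := by
    rw [show p - 1 = q + 1 by ring, rpow_add_one (by positivity)]
    ring
  have hpow : w ^ p = w ^ q * w ^ 2 := by
    rw [show p = q + (2 : ℕ) by push_cast; ring, rpow_add_natCast' hw0 (by push_cast; linarith)]
  rw [hsplit, hpow]
  rcases le_total q 1 with hq1 | hq1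
  · -- concavity of `t ↦ t ^ q` between `1` and `2`, and `2 ^ q ≥ 3 / 2`
    have hchord : 1 + w / 2 ≤ (1 + w) ^ q := by
      have h := (concaveOn_rpow hq0 hq1).2 (mem_Ici.mpr zero_le_one)
        (mem_Ici.mpr zero_le_two) (sub_nonneg.mpr hw1) hw0 (sub_add_cancel 1 w)
      have h2q : (2 : ℝ) ^ q = 2 ^ p / 4 := by
        rw [rpow_sub zero_lt_two]
        norm_num
      simp only [smul_eq_mul, one_rpow, h2q] at h
      rw [show (1 - w) * 1 + w * 2 = 1 + w by ring] at h
      nlinarith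
    have hwq : w ≤ w ^ q := by
      simpa using rpow_le_rpow_of_exponent_ge' hw0 hw1 hq0 hq1
    nlinarith [mul_nonneg hw0 (sq_nonneg (1 - w)), mul_le_mul_of_nonneg_right hwq (sq_nonneg w),
      mul_le_mul_of_nonneg_right hchord (by nlinarith : 0 ≤ 1 - w ^ 2)]
  · -- Bernoulli's inequality for `(1 + w) ^ q` and `w ^ q`
    have hb1 : 1 + q * w ≤ (1 + w) ^ q := one_add_mul_self_le_rpow_one_add (by linarith) hq1
    have hb2 : 1 + q * (w - 1) ≤ w ^ q := by
      simpa using one_add_mul_self_le_rpow_one_add (s := w - 1) (by linarith) hq1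
    nlinarith [mul_le_mul_of_nonneg_right hb1 (by nlinarith : 0 ≤ 1 - w ^ 2),
      mul_le_mul_of_nonneg_right hb2 (sq_nonneg w),
      mul_nonneg (mul_nonneg hq0 hw0) (sub_nonneg.mpr hw1)]

lemma monotoneOn_rpow_add_inv_sub {p : ℝ} (hp : 6 ≤ (2 : ℝ) ^ p) :
    MonotoneOn (fun u : ℝ => (u + u⁻¹) ^ p - u ^ p - u ^ (-p)) (Ici 1) := by
  have hderiv (v : ℝ) (hv : 0 < v) : HasDerivAt (fun u : ℝ => (u + u⁻¹) ^ p - u ^ p - u ^ (-p))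
      ((1 - (v ^ 2)⁻¹) * p * (v + v⁻¹) ^ (p - 1) - p * v ^ (p - 1) + p * v ^ (-p - 1)) v := by
    have h := ((((hasDerivAt_id v).add (hasDerivAt_inv hv.ne')).rpow_const (p := p)
      (Or.inl (by positivity : v + v⁻¹ ≠ 0))).sub
        (hasDerivAt_rpow_const (p := p) (Or.inl hv.ne'))).sub
      (hasDerivAt_rpow_const (p := -p) (Or.inl hv.ne'))
    exact h.congr_deriv (by simp only [Pi.add_apply, id_eq]; ring)
  refine monotoneOn_of_deriv_nonneg (convex_Ici 1)
    (fun v hv => (hderiv v (zero_lt_one.trans_le hv)).continuousAt.continuousWithinAt)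
    (fun v hv => (hderiv v (zero_lt_one.trans (by simpa using hv))).differentiableAt
      |>.differentiableWithinAt) fun v hv => ?_
  rw [interior_Ici, mem_Ioi] at hv
  have hv0 : 0 < v := zero_lt_one.trans hv
  rw [(hderiv v hv0).deriv]
  -- with `w = v⁻²` the derivative is `p v ^ (p - 1) ((1 + w) ^ (p - 1) (1 - w) - (1 - w ^ p))`
  set w := (v ^ 2)⁻¹
  have hw0 : 0 ≤ w := by positivity
  have hw1 : w ≤ 1 := inv_le_one_of_one_le₀ (by nlinarith)
  have hsum : (v + v⁻¹) ^ (p - 1) = v ^ (p - 1) * (1 + w) ^ (p - 1) := by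
    rw [← mul_rpow hv0.le (by positivity)]
    congr 1
    simp only [w]
    field_simp
  have hneg : v ^ (-p - 1) = v ^ (p - 1) * w ^ p := by
    rw [show w = v ^ (-2 : ℝ) by rw [rpow_neg hv0.le]; norm_cast, ← rpow_mul hv0.le,
      ← rpow_add hv0]
    ring_nf
  rw [hsum, hneg]
  have := one_sub_rpow_le_one_add_rpow_mul_one_sub hp hw0 hw1
  have : 0 ≤ p * v ^ (p - 1) := mul_nonneg (by linarith [two_le_of_six_le_two_rpow hp])
    (rpow_nonneg hv0.le _)
  nlinarith

lemma rpow_add_rpow_add_mul_sqrt_le_of_le {p : ℝ} (hp : 6 ≤ (2 : ℝ) ^ p) {x y : ℝ}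
    (hx : 0 ≤ x) (hxy : x ≤ y) :
    x ^ p + y ^ p + (2 ^ p - 2) * √(x ^ p * y ^ p) ≤ (x + y) ^ p := by
  have hp0 : p ≠ 0 := by linarith [two_le_of_six_le_two_rpow hp]
  rcases hx.eq_or_lt with rfl | hx
  · simp [zero_rpow hp0]
  have hy : 0 < y := hx.trans_le hxy
  -- by homogeneity, with `x = m u⁻¹` and `y = m u`, this is the monotonicity above at `u ≥ 1`
  set u := √y / √x
  set m := √x * √y
  have hu0 : 0 < u := by positivity
  have hu1 : 1 ≤ u := (one_le_div (by positivity)).mpr (sqrt_le_sqrt hxy)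
  have hm0 : 0 ≤ m := by positivity
  have hmx : m * u⁻¹ = x := by
    simp only [m, u]
    field_simp
    exact sq_sqrt hx.le
  have hmy : m * u = y := by
    simp only [m, u]
    field_simp
    exact sq_sqrt hy.le
  have hsqrt : √(x ^ p * y ^ p) = m ^ p := by
    rw [← mul_rpow hx.le hy.le, ← hmx, ← hmy, mul_mul_mul_comm, inv_mul_cancel₀ hu0.ne', mul_one,
      ← sq, ← rpow_natCast, ← rpow_mul hm0, mul_comm, rpow_mul hm0, rpow_natCast,
      sqrt_sq (rpow_nonneg hm0 _)]
  have hxp : x ^ p = m ^ p * u ^ (-p) := by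
    rw [← hmx, mul_rpow hm0 (by positivity), rpow_neg hu0.le, inv_rpow hu0.le]
  have hyp : y ^ p = m ^ p * u ^ p := by rw [← hmy, mul_rpow hm0 hu0.le]
  have hxyp : (x + y) ^ p = m ^ p * (u + u⁻¹) ^ p := by
    rw [← hmx, ← hmy, ← mul_rpow hm0 (by positivity)]
    ring_nf
  have hmono := monotoneOn_rpow_add_inv_sub hp (mem_Ici.mpr le_rfl) (mem_Ici.mpr hu1) hu1
  simp only [inv_one, one_rpow] at hmono
  rw [hsqrt, hxp, hyp, hxyp]
  nlinarith [mul_le_mul_of_nonneg_left hmono (rpow_nonneg hm0 p)]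

lemma rpow_add_rpow_add_mul_sqrt_le {p : ℝ} (hp : 6 ≤ (2 : ℝ) ^ p) {x y : ℝ}
    (hx : 0 ≤ x) (hy : 0 ≤ y) :
    x ^ p + y ^ p + (2 ^ p - 2) * √(x ^ p * y ^ p) ≤ (x + y) ^ p := by
  rcases le_total x y with hxy | hyx
  · exact rpow_add_rpow_add_mul_sqrt_le_of_le hp hx hxy
  · simpa only [add_comm, mul_comm] using rpow_add_rpow_add_mul_sqrt_le_of_le hp hy hyx

end RealInequality

lemma Finset.sum_eq_ite_of_forall_add_sum_eq_zero_or_one {ι : Type*} [DecidableEq ι] {c₀ : ℤ}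
    {c : ι → ℤ} (h : ∀ S : Finset ι, c₀ + ∑ j ∈ S, c j = 0 ∨ c₀ + ∑ j ∈ S, c j = 1) {i : ι}
    (hi : c i ≠ 0) (S : Finset ι) :
    ∑ j ∈ S, c j = if i ∈ S then c i else 0 := by
  have honly (j : ι) : c j = if j = i then c i else 0 := by
    split_ifs with hj
    · rw [hj]
    · have h0 := h ∅
      have hi' := h {i}
      have hj' := h {j}
      have hij := h {i, j}
      rw [Finset.sum_empty] at h0
      rw [Finset.sum_singleton] at hi' hj'
      rw [Finset.sum_pair (Ne.symm hj)] at hij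
      omega
  rw [Finset.sum_congr rfl fun j _ => honly j, Finset.sum_ite_eq']

section Splitting

variable {V : Type*} [AddCommGroup V] {k : ℕ} {A : Set V} (f : V →+ ℤ)

lemma parallelepipeds_eq_union_of_zero_one (h01 : ∀ x ∈ A, f x = 0 ∨ f x = 1) :
    parallelepipeds k A =
      parallelepipeds k {x ∈ A | f x = 0} ∪ parallelepipeds k {x ∈ A | f x = 1} ∪
        ⋃ i, (straddlingParallelepipeds i {x ∈ A | f x = 0} {x ∈ A | f x = 1} ∪
          straddlingParallelepipeds i {x ∈ A | f x = 1} {x ∈ A | f x = 0}) := by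
  refine Subset.antisymm (fun p hp => ?_) (union_subset (union_subset
    (parallelepipeds_mono (sep_subset _ _)) (parallelepipeds_mono (sep_subset _ _)))
    (iUnion_subset fun i => union_subset
      ((straddlingParallelepipeds_subset _ _ _).trans
        (parallelepipeds_mono (union_subset (sep_subset _ _) (sep_subset _ _))))
      ((straddlingParallelepipeds_subset _ _ _).trans
        (parallelepipeds_mono (union_subset (sep_subset _ _) (sep_subset _ _))))))
  obtain ⟨a, h⟩ := p
  have hval (S : Finset (Fin k)) : f (a + ∑ j ∈ S, h j) = f a + ∑ j ∈ S, f (h j) := by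
    rw [map_add, map_sum]
  have hval01 (S : Finset (Fin k)) : f a + ∑ j ∈ S, f (h j) = 0 ∨ f a + ∑ j ∈ S, f (h j) = 1 :=
    hval S ▸ h01 _ (hp S)
  by_cases hflat : ∀ j, f (h j) = 0
  · have hconst (S : Finset (Fin k)) : f (a + ∑ j ∈ S, h j) = f a := by simp [hval, hflat]
    rcases h01 a (by simpa using hp ∅) with ha | ha
    · exact Or.inl (Or.inl fun S => ⟨hp S, (hconst S).trans ha⟩)
    · exact Or.inl (Or.inr fun S => ⟨hp S, (hconst S).trans ha⟩)
  push Not at hflat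
  obtain ⟨i, hi⟩ := hflat
  have hface (S : Finset (Fin k)) :
      f (a + ∑ j ∈ S, h j) = f a + if i ∈ S then f (h i) else 0 := by
    rw [hval, Finset.sum_eq_ite_of_forall_add_sum_eq_zero_or_one hval01 hi]
  have hcases : (f a = 0 ∧ f (h i) = 1) ∨ (f a = 1 ∧ f (h i) = -1) := by
    have h0 := hval01 ∅
    have hi' := hval01 {i}
    rw [Finset.sum_empty] at h0
    rw [Finset.sum_singleton] at hi'
    omega
  refine Or.inr (mem_iUnion.mpr ⟨i, ?_⟩)
  rcases hcases with ⟨ha, hhi⟩ | ⟨ha, hhi⟩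
  · refine Or.inl fun S => ?_
    split_ifs with hS <;> exact ⟨hp S, by simp [hface, hS, ha, hhi]⟩
  · refine Or.inr fun S => ?_
    split_ifs with hS <;> exact ⟨hp S, by simp [hface, hS, ha, hhi]⟩

lemma ncard_parallelepipeds_le_of_zero_one (hA : A.Finite) (h01 : ∀ x ∈ A, f x = 0 ∨ f x = 1) :
    ((parallelepipeds k A).ncard : ℝ) ≤
      (parallelepipeds k {x ∈ A | f x = 0}).ncard + (parallelepipeds k {x ∈ A | f x = 1}).ncard +
        2 * k * √((parallelepipeds k {x ∈ A | f x = 0}).ncard *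
          (parallelepipeds k {x ∈ A | f x = 1}).ncard) := by
  set A₀ := {x ∈ A | f x = 0}
  set A₁ := {x ∈ A | f x = 1}
  have hA₀ : A₀.Finite := hA.subset (sep_subset _ _)
  have hA₁ : A₁.Finite := hA.subset (sep_subset _ _)
  have hstraddle (i : Fin k) {B C : Set V} (hB : B.Finite) (hC : C.Finite) :
      ((straddlingParallelepipeds i B C).ncard : ℝ) ≤
        √((parallelepipeds k B).ncard * (parallelepipeds k C).ncard) :=
    Real.le_sqrt_of_sq_le (by exact_mod_cast ncard_straddlingParallelepipeds_sq_le i hB hC)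
  have hcount : (parallelepipeds k A).ncard ≤
      (parallelepipeds k A₀).ncard + (parallelepipeds k A₁).ncard +
        ∑ i : Fin k, ((straddlingParallelepipeds i A₀ A₁).ncard +
          (straddlingParallelepipeds i A₁ A₀).ncard) := by
    rw [parallelepipeds_eq_union_of_zero_one f h01]
    refine (ncard_union_le _ _).trans (add_le_add (ncard_union_le _ _) ?_)
    exact (ncard_iUnion_le_of_fintype _).trans (Finset.sum_le_sum fun i _ => ncard_union_le _ _)
  calc ((parallelepipeds k A).ncard : ℝ)
      ≤ (parallelepipeds k A₀).ncard + (parallelepipeds k A₁).ncard +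
          ∑ i : Fin k, (((straddlingParallelepipeds i A₀ A₁).ncard : ℝ) +
            (straddlingParallelepipeds i A₁ A₀).ncard) := by exact_mod_cast hcount
    _ ≤ (parallelepipeds k A₀).ncard + (parallelepipeds k A₁).ncard +
          ∑ _i : Fin k, 2 * √((parallelepipeds k A₀).ncard * (parallelepipeds k A₁).ncard) := by
        gcongr with i
        rw [two_mul]
        refine add_le_add (hstraddle i hA₀ hA₁) ?_
        rw [mul_comm]
        exact hstraddle i hA₁ hA₀
    _ = _ := by
        rw [Finset.sum_const, Finset.card_univ, Fintype.card_fin, nsmul_eq_mul]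
        ring

lemma ncard_parallelepipeds_le_rpow_of_zero_one (hk : 2 ≤ k) {p : ℝ}
    (hp : (2 : ℝ) ^ p = 2 * k + 2) (hA : A.Finite) (h01 : ∀ x ∈ A, f x = 0 ∨ f x = 1)
    (h₀ : ((parallelepipeds k {x ∈ A | f x = 0}).ncard : ℝ) ≤ ({x ∈ A | f x = 0}.ncard : ℝ) ^ p)
    (h₁ : ((parallelepipeds k {x ∈ A | f x = 1}).ncard : ℝ) ≤ ({x ∈ A | f x = 1}.ncard : ℝ) ^ p) :
    ((parallelepipeds k A).ncard : ℝ) ≤ (A.ncard : ℝ) ^ p := by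
  have h6 : 6 ≤ (2 : ℝ) ^ p := by
    rw [hp]
    linarith [(Nat.ofNat_le_cast.mpr hk : (2 : ℝ) ≤ k)]
  set A₀ := {x ∈ A | f x = 0}
  set A₁ := {x ∈ A | f x = 1}
  have hsplit : A = A₀ ∪ A₁ := by
    ext x
    constructor
    · intro hx
      exact (h01 x hx).imp (⟨hx, ·⟩) (⟨hx, ·⟩)
    · rintro (⟨hx, -⟩ | ⟨hx, -⟩) <;> exact hx
  have hdisj : Disjoint A₀ A₁ := disjoint_left.mpr fun _ h₀ h₁ => zero_ne_one (h₀.2.symm.trans h₁.2)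
  have hcard : (A.ncard : ℝ) = A₀.ncard + A₁.ncard := by
    conv_lhs => rw [hsplit]
    rw [ncard_union_eq hdisj (hA.subset (sep_subset _ _)) (hA.subset (sep_subset _ _)),
      Nat.cast_add]
  calc ((parallelepipeds k A).ncard : ℝ)
      ≤ (parallelepipeds k A₀).ncard + (parallelepipeds k A₁).ncard +
          (2 ^ p - 2) * √((parallelepipeds k A₀).ncard * (parallelepipeds k A₁).ncard) := by
        rw [hp, add_sub_cancel_right]
        exact ncard_parallelepipeds_le_of_zero_one f hA h01
    _ ≤ (A₀.ncard : ℝ) ^ p + (A₁.ncard : ℝ) ^ p +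
          (2 ^ p - 2) * √((A₀.ncard : ℝ) ^ p * (A₁.ncard : ℝ) ^ p) := by
        have : (0 : ℝ) ≤ 2 ^ p - 2 := by linarith
        gcongr
    _ ≤ (A.ncard : ℝ) ^ p := by
        rw [hcard]
        exact rpow_add_rpow_add_mul_sqrt_le h6 (Nat.cast_nonneg _) (Nat.cast_nonneg _)

end Splitting

lemma cube_finite (n d : ℕ) : (cube n d).Finite :=
  (Finite.pi fun _ => finite_Ico (0 : ℤ) n).subset fun _ hx i _ => hx i

lemma ncard_parallelepipeds_le_rpow_of_subset_cube {k : ℕ} (hk : 2 ≤ k) {p : ℝ}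
    (hp : (2 : ℝ) ^ p = 2 * k + 2) {d : ℕ} {A : Set (Fin d → ℤ)} (hA : A ⊆ cube 2 d) :
    ((parallelepipeds k A).ncard : ℝ) ≤ (A.ncard : ℝ) ^ p := by
  obtain ⟨n, hn⟩ : ∃ n, A.ncard = n := ⟨_, rfl⟩
  induction n using Nat.strong_induction_on generalizing A with
  | _ n ih =>
  have hfin : A.Finite := (cube_finite 2 d).subset hA
  rcases A.subsingleton_or_nontrivial with hsub | ⟨x, hx, y, hy, hxy⟩
  · rcases hsub.eq_empty_or_singleton with rfl | ⟨a, rfl⟩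
    · simp only [parallelepipeds_empty, ncard_empty, Nat.cast_zero]
      positivity
    · simp only [parallelepipeds_singleton, ncard_singleton, Nat.cast_one, Real.one_rpow, le_refl]
  obtain ⟨j, hj⟩ := Function.ne_iff.mp hxy
  set f := Pi.evalAddMonoidHom (fun _ : Fin d => ℤ) j
  have h01 (z : Fin d → ℤ) (hz : z ∈ A) : f z = 0 ∨ f z = 1 := by
    have := hA hz j
    simp only [f, Pi.evalAddMonoidHom_apply]
    omega
  have hlevel (c : ℤ) : ((parallelepipeds k {z ∈ A | f z = c}).ncard : ℝ) ≤
      ({z ∈ A | f z = c}.ncard : ℝ) ^ p := by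
    refine ih _ ?_ ((sep_subset _ _).trans hA) rfl
    -- `x` and `y` do not both lie in the level set
    refine hn ▸ ncard_lt_ncard ((ssubset_iff_of_subset (sep_subset _ _)).mpr ?_) hfin
    by_cases hxc : f x = c
    · exact ⟨y, hy, fun hyc => hj (hxc.trans hyc.2.symm)⟩
    · exact ⟨x, hx, fun hxc' => hxc hxc'.2⟩
  exact ncard_parallelepipeds_le_rpow_of_zero_one f hk hp hfin h01 (hlevel 0) (hlevel 1)

lemma Pk_eq_ncard_parallelepipeds (k : ℕ) {d : ℕ} (A : Set (Fin d → ℤ)) :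
    Pk k A = (parallelepipeds k A).ncard := by
  unfold Pk parallelepipeds
  congr 1
  ext p
  refine ⟨fun h S => ?_, fun h ε => h _⟩
  simpa using h (· ∈ S)

theorem energy_bound_binary_cube (d k : ℕ) (hk : 2 ≤ k)
    (A : Set (Fin d → ℤ)) (hA : A ⊆ cube 2 d) :
    (Pk k A : ℝ) ≤ (A.ncard : ℝ) ^ Real.logb 2 (2 * (k : ℝ) + 2) := by
  rw [Pk_eq_ncard_parallelepipeds]
  exact ncard_parallelepipeds_le_rpow_of_subset_cube hk
    (Real.rpow_logb (by norm_num) (by norm_num) (by positivity)) hA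
end

section
/- Let d ≥ 0 and k ≥ 2 be integers. For the full binary cube A = {0,1}^d ⊆ ℤ^d one has P_k(A) = (2k+2)^d; in particular P_k(A) = |A|^{log₂(2k+2)}, so the exponent log₂(2k+2) in the bound P_k(A) ≤ |A|^{log₂(2k+2)} cannot be decreased. -/
/-!
Membership of `(a, h₁, …, h_k)` in the energy set of a product set `∏ⱼ Bⱼ` is decided coordinate
by coordinate, so the energy of `{0,1}^d` is the `d`-th power of the energy of `{0,1} ⊆ ℤ`.
In dimension one, `a ∈ {0,1}` and each `a + hᵢ ∈ {0,1}`, while `a + hᵢ + hⱼ ∈ {0,1}` forbids two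
nonzero `hᵢ`: the solutions are `(a, 0)` and `(a, (1 - 2a) eᵢ)` with `a ∈ {0,1}`, which are
`2 (k + 1)` in number.
-/

open scoped BigOperators

open Finset

def energySet (k : ℕ) {G : Type*} [AddCommMonoid G] (A : Set G) : Set (G × (Fin k → G)) :=
  {p | ∀ ε : Fin k → Bool, p.1 + ∑ i ∈ univ.filter (fun i => ε i = true), p.2 i ∈ A}

lemma Pk_eq_ncard_energySet (k : ℕ) {d : ℕ} (A : Set (Fin d → ℤ)) :
    Pk k A = (energySet k A).ncard :=
  rfl

section energySet

variable {k : ℕ} {G : Type*} [AddCommMonoid G]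

lemma mem_energySet_iff {A : Set G} {p : G × (Fin k → G)} :
    p ∈ energySet k A ↔ ∀ S : Finset (Fin k), p.1 + ∑ i ∈ S, p.2 i ∈ A := by
  refine ⟨fun hp S => ?_, fun hp ε => hp _⟩
  simpa using hp (· ∈ S)

variable {ι : Type*} {G : ι → Type*} [∀ j, AddCommMonoid (G j)]

def energySetPiEquiv (B : ∀ j, Set (G j)) :
    energySet k (Set.univ.pi B) ≃ ∀ j, energySet k (B j) where
  toFun p j := ⟨(p.1.1 j, fun i => p.1.2 i j), mem_energySet_iff.2 fun S => by
    simpa using mem_energySet_iff.1 p.2 S j (Set.mem_univ j)⟩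
  invFun g := ⟨(fun j => (g j).1.1, fun i j => (g j).1.2 i), mem_energySet_iff.2 fun S j _ => by
    simpa using mem_energySet_iff.1 (g j).2 S⟩
  left_inv _ := rfl
  right_inv _ := rfl

lemma ncard_energySet_pi [Fintype ι] (B : ∀ j, Set (G j)) :
    (energySet k (Set.univ.pi B)).ncard = ∏ j, (energySet k (B j)).ncard := by
  simp only [← Nat.card_coe_set_eq, Nat.card_congr (energySetPiEquiv B), Nat.card_pi]

end energySet

lemma cube_two_eq_pi (d : ℕ) : cube 2 d = Set.univ.pi fun _ => ({0, 1} : Set ℤ) := by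
  ext x
  simp only [cube, Set.mem_ofPred_eq, Set.mem_pi, Set.mem_univ, Set.mem_insert_iff,
    Set.mem_singleton_iff, forall_const]
  exact forall_congr' fun i => by omega

def binaryEnergyParam (k : ℕ) (q : ℤ × Option (Fin k)) : ℤ × (Fin k → ℤ) :=
  (q.1, q.2.elim 0 fun i => Pi.single i (1 - 2 * q.1))

lemma binaryEnergyParam_injective (k : ℕ) : Function.Injective (binaryEnergyParam k) := by
  rintro ⟨a, o⟩ ⟨a', o'⟩ h
  simp only [binaryEnergyParam, Prod.mk.injEq] at h
  obtain ⟨rfl, h⟩ := h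
  have hc : 1 - 2 * a ≠ 0 := by omega
  cases o with
  | none => cases o' with
    | none => rfl
    | some i' => simpa [hc] using (congrFun h i').symm
  | some i => cases o' with
    | none => simpa [hc] using congrFun h i
    | some i' =>
      have := congrFun h i
      by_cases hi : i = i'
      · rw [hi]
      · simp [Ne.symm hi, hc] at this

lemma energySet_binary (k : ℕ) :
    energySet k ({0, 1} : Set ℤ) = binaryEnergyParam k '' ({0, 1} ×ˢ Set.univ) := by
  ext ⟨a, h⟩
  simp only [mem_energySet_iff, Set.mem_image, Set.mem_prod, Set.mem_insert_iff,
    Set.mem_singleton_iff, Set.mem_univ, and_true]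
  constructor
  · intro hmem
    have ha : a = 0 ∨ a = 1 := by simpa using hmem ∅
    by_cases h0 : h = 0
    · exact ⟨(a, none), ha, by simp [binaryEnergyParam, h0]⟩
    obtain ⟨i, hi : h i ≠ 0⟩ := Function.ne_iff.1 h0
    have hai : a + h i = 0 ∨ a + h i = 1 := by simpa using hmem {i}
    have hj : ∀ j, j ≠ i → h j = 0 := fun j hji => by
      have haj : a + h j = 0 ∨ a + h j = 1 := by simpa using hmem {j}
      have haij : a + (h i + h j) = 0 ∨ a + (h i + h j) = 1 := by
        simpa [sum_pair (Ne.symm hji)] using hmem {i, j}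
      omega
    refine ⟨(a, some i), ha, ?_⟩
    ext j
    · rfl
    · by_cases hji : j = i
      · subst hji
        simp only [binaryEnergyParam, Option.elim_some, Pi.single_eq_same]
        omega
      · simp [binaryEnergyParam, hji, hj j hji]
  · rintro ⟨⟨a, o⟩, ha, hq⟩ S
    simp only [binaryEnergyParam, Prod.mk.injEq] at hq
    obtain ⟨rfl, rfl⟩ := hq
    cases o with
    | none => simpa using ha
    | some i =>
      simp only [Option.elim_some, sum_pi_single']
      split_ifs <;> omega

lemma ncard_energySet_binary (k : ℕ) : (energySet k ({0, 1} : Set ℤ)).ncard = 2 * k + 2 := by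
  rw [energySet_binary, Set.ncard_image_of_injective _ (binaryEnergyParam_injective k),
    Set.ncard_prod, Set.ncard_pair zero_ne_one, Set.ncard_univ, Nat.card_eq_fintype_card,
    Fintype.card_option, Fintype.card_fin]
  ring

lemma ncard_cube_two (d : ℕ) : (cube 2 d).ncard = 2 ^ d := by
  rw [cube_two_eq_pi, ← Nat.card_coe_set_eq, Nat.card_congr (Equiv.Set.univPi _), Nat.card_pi]
  simp only [Nat.card_coe_set_eq, Set.ncard_pair zero_ne_one, prod_const, card_univ,
    Fintype.card_fin]

lemma Real.pow_rpow_logb {b x : ℝ} (hb : 0 < b) (hb1 : b ≠ 1) (hx : 0 < x) (n : ℕ) :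
    (b ^ n) ^ Real.logb b x = x ^ n := by
  rw [← Real.rpow_pow_comm hb.le, Real.rpow_logb hb hb1 hx]

theorem energy_full_binary_cube_general (d k : ℕ) :
    Pk k (cube 2 d) = (2 * k + 2) ^ d ∧
    (Pk k (cube 2 d) : ℝ) = (((cube 2 d).ncard : ℝ)) ^ Real.logb 2 (2 * (k : ℝ) + 2) := by
  have hPk : Pk k (cube 2 d) = (2 * k + 2) ^ d := by
    rw [Pk_eq_ncard_energySet, cube_two_eq_pi, ncard_energySet_pi,
      ncard_energySet_binary, prod_const, card_univ, Fintype.card_fin]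
  refine ⟨hPk, ?_⟩
  rw [hPk, ncard_cube_two]
  push_cast
  exact (Real.pow_rpow_logb two_pos (by norm_num) (by positivity) d).symm

theorem energy_full_binary_cube (d k : ℕ) (hk : 2 ≤ k) :
    Pk k (cube 2 d) = (2 * k + 2) ^ d ∧
    (Pk k (cube 2 d) : ℝ) = (((cube 2 d).ncard : ℝ)) ^ Real.logb 2 (2 * (k : ℝ) + 2) :=
  energy_full_binary_cube_general d k
end

section
/- Let k ≥ 2 be an integer and set t = log₂(2k+2). Then for all real numbers x, y ≥ 0 one has x^t + y^t + 2k·x^{t/2}·y^{t/2} ≤ (x+y)^t. -/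
/-!
Both sides are homogeneous of degree `t`, so one may write `x = e^(s+u)`, `y = e^(s-u)` and
reduce to `2 cosh(tu) + 2^t - 2 ≤ (2 cosh u)^t`, with equality at `u = 0`. For `t ≥ 2` the
difference of the two sides is nondecreasing in `u ≥ 0`: its derivative is nonnegative by
`sinh(tu) ≤ sinh u (2 cosh u)^(t-1)`, which after putting `q = e^(-2u)` becomes
`1 - q^t ≤ (1 - q)(1 + q)^(t-1)`, a consequence of two Bernoulli inequalities. Finally
`2^t - 2 = 2k` when `t = log₂(2k+2)`.
-/

open Real

lemma one_sub_rpow_le_mul_one_add_rpow {q t : ℝ} (hq₀ : 0 ≤ q) (hq₁ : q ≤ 1) (ht : 2 ≤ t) :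
    1 - q ^ t ≤ (1 - q) * (1 + q) ^ (t - 1) := by
  have bernoulli_add : 1 + (t - 1) * q ≤ (1 + q) ^ (t - 1) :=
    one_add_mul_self_le_rpow_one_add (by linarith) (by linarith)
  have bernoulli_sub : 1 + (t - 1) * (q - 1) ≤ q ^ (t - 1) := by
    simpa using one_add_mul_self_le_rpow_one_add (s := q - 1) (by linarith) (by linarith)
  have hqt : q ^ t = q * q ^ (t - 1) := by
    rw [← rpow_one_add' hq₀ (by linarith)]; ring_nf
  rw [hqt]
  nlinarith [mul_le_mul_of_nonneg_left bernoulli_add (sub_nonneg.2 hq₁),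
    mul_le_mul_of_nonneg_left bernoulli_sub hq₀]

lemma sinh_mul_le_sinh_mul_two_cosh_rpow {t u : ℝ} (ht : 2 ≤ t) (hu : 0 ≤ u) :
    sinh (t * u) ≤ sinh u * (2 * cosh u) ^ (t - 1) := by
  set q := exp (-(2 * u))
  have hq₁ : q ≤ 1 := exp_le_one_iff.2 (by linarith)
  have hsinh : 2 * sinh u = exp u * (1 - q) := by
    rw [sinh_eq, mul_sub, ← exp_add]; ring_nf
  have hcosh : 2 * cosh u = exp u * (1 + q) := by
    rw [cosh_eq, mul_add, ← exp_add]; ring_nf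
  have hsinh_mul : 2 * sinh (t * u) = exp (t * u) * (1 - q ^ t) := by
    rw [sinh_eq, ← exp_mul, mul_sub, ← exp_add]; ring_nf
  have hexp : exp u * exp u ^ (t - 1) = exp (t * u) := by
    rw [← exp_mul, ← exp_add]; ring_nf
  have key := one_sub_rpow_le_mul_one_add_rpow (exp_pos _).le hq₁ ht
  rw [hcosh, mul_rpow (exp_pos u).le (by positivity)]
  calc sinh (t * u) = exp (t * u) * (1 - q ^ t) / 2 := by linarith
    _ ≤ exp (t * u) * ((1 - q) * (1 + q) ^ (t - 1)) / 2 := by gcongr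
    _ = sinh u * (exp u ^ (t - 1) * (1 + q) ^ (t - 1)) := by
      rw [← hexp]; linear_combination -(exp u ^ (t - 1) * (1 + q) ^ (t - 1) / 2) * hsinh

lemma two_cosh_mul_add_le_two_cosh_rpow {t : ℝ} (ht : 2 ≤ t) (u : ℝ) :
    2 * cosh (t * u) + (2 ^ t - 2) ≤ (2 * cosh u) ^ t := by
  set G : ℝ → ℝ := fun v => (2 * cosh v) ^ t - 2 * cosh (t * v)
  have hG : ∀ v, HasDerivAt G
      (2 * sinh v * t * (2 * cosh v) ^ (t - 1) - 2 * (sinh (t * v) * t)) v :=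
    fun v => (((hasDerivAt_cosh v).const_mul 2).rpow_const (Or.inl (by positivity))).sub
      ((((hasDerivAt_id v).const_mul t).cosh).const_mul 2 |>.congr_deriv (by simp))
  have hmono : MonotoneOn G (Set.Ici 0) := by
    refine monotoneOn_of_hasDerivWithinAt_nonneg (convex_Ici 0)
      (fun v _ => (hG v).continuousAt.continuousWithinAt) (fun v _ => (hG v).hasDerivWithinAt) ?_
    intro v hv
    rw [interior_Ici] at hv
    have := sinh_mul_le_sinh_mul_two_cosh_rpow ht hv.le
    nlinarith
  have hG_abs := hmono Set.self_mem_Ici (Set.mem_Ici.2 (abs_nonneg u)) (abs_nonneg u)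
  have hcosh_abs : cosh (t * |u|) = cosh (t * u) := by
    rw [← cosh_abs (t * u), abs_mul, abs_of_nonneg (by linarith : (0 : ℝ) ≤ t)]
  simp only [G, cosh_abs, hcosh_abs, mul_zero, cosh_zero, mul_one] at hG_abs
  linarith

lemma rpow_add_rpow_add_mul_rpow_le_add_rpow {t : ℝ} (ht : 2 ≤ t) {x y : ℝ} (hx : 0 ≤ x)
    (hy : 0 ≤ y) :
    x ^ t + y ^ t + (2 ^ t - 2) * x ^ (t / 2) * y ^ (t / 2) ≤ (x + y) ^ t := by
  have ht₀ : t ≠ 0 := by positivity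
  rcases hx.eq_or_lt with rfl | hx
  · simp [zero_rpow ht₀, zero_rpow (div_ne_zero ht₀ two_ne_zero)]
  rcases hy.eq_or_lt with rfl | hy
  · simp [zero_rpow ht₀, zero_rpow (div_ne_zero ht₀ two_ne_zero)]
  obtain ⟨s, u, rfl, rfl⟩ : ∃ s u, x = exp (s + u) ∧ y = exp (s - u) :=
    ⟨(log x + log y) / 2, (log x - log y) / 2, by ring_nf; rw [exp_log hx],
      by ring_nf; rw [exp_log hy]⟩
  have hsum : exp (s + u) + exp (s - u) = exp s * (2 * cosh u) := by
    rw [cosh_eq, exp_add, exp_sub, exp_neg]; field_simp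
  rw [hsum, mul_rpow (exp_pos s).le (by positivity), ← exp_mul, ← exp_mul, ← exp_mul, ← exp_mul,
    ← exp_mul]
  calc exp ((s + u) * t) + exp ((s - u) * t)
        + (2 ^ t - 2) * exp ((s + u) * (t / 2)) * exp ((s - u) * (t / 2))
      = exp (s * t) * (2 * cosh (t * u) + (2 ^ t - 2)) := by
        rw [mul_assoc, ← exp_add, cosh_eq, mul_add, mul_div_cancel₀ _ two_ne_zero, mul_add,
          ← exp_add, ← exp_add]
        ring_nf
    _ ≤ exp (s * t) * (2 * cosh u) ^ t := by
        gcongr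
        exact two_cosh_mul_add_le_two_cosh_rpow ht u

theorem kane_tao_elementary_inequality (k : ℕ) (hk : 2 ≤ k) (t : ℝ)
    (ht : t = Real.logb 2 (2 * (k : ℝ) + 2)) (x y : ℝ) (hx : 0 ≤ x) (hy : 0 ≤ y) :
    x ^ t + y ^ t + 2 * (k : ℝ) * x ^ (t / 2) * y ^ (t / 2) ≤ (x + y) ^ t := by
  have hk' : (2 : ℝ) ≤ k := by exact_mod_cast hk
  have h2t : (2 : ℝ) ^ t = 2 * k + 2 := by
    rw [ht]; exact rpow_logb (by norm_num) (by norm_num) (by positivity)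
  have ht₂ : 2 ≤ t := by
    rw [ht, le_logb_iff_rpow_le one_lt_two (by positivity)]
    linarith [show (2 : ℝ) ^ (2 : ℝ) = 4 by norm_num]
  simpa [h2t] using rpow_add_rpow_add_mul_rpow_le_add_rpow ht₂ hx hy
end
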